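/- Subject reduction for the sequential λ-calculus: if Γ ⊢ N : τ and N β-reduces in one step to M, then Γ ⊢ M : τ. -/

import Mathlib

/-- Terms of the sequential λ-calculus in de Bruijn representation
(so terms are automatically identified up to α-equivalence):
nil `*`, variable prefix `x.M`, push/application `[N].M`,
and pop/abstraction `<x>.M`. -/
inductive STm : Type
  | star : STm
  | var  : Nat → STm → STm
  | push : STm → STm → STm
  | pop  : STm → STm

namespace STm

/-- Lifting of a renaming under a binder. -/
def liftF (f : Nat → Nat) : Nat → Nat
  | 0 => 0
  | n+1 => f n + 1

/-- Renaming of de Bruijn indices. -/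
def rename (f : Nat → Nat) : STm → STm
  | star => star
  | var n M => var (f n) (rename f M)
  | push N M => push (rename f N) (rename f M)
  | pop M => pop (rename (liftF f) M)

/-- Capture-avoiding composition `N ; M`. -/
def comp : STm → STm → STm
  | star, P => P
  | var n N, P => var n (comp N P)
  | push Q N, P => push Q (comp N P)
  | pop N, P => pop (comp N (rename Nat.succ P))

/-- Lifting of a substitution under a binder. -/
def liftS (σ : Nat → STm) : Nat → STm
  | 0 => var 0 star
  | n+1 => rename Nat.succ (σ n)

/-- Capture-avoiding simultaneous substitution; note
`{N/x}(x.M) = N ; {N/x}M`. -/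
def subst (σ : Nat → STm) : STm → STm
  | star => star
  | var n M => comp (σ n) (subst σ M)
  | push N M => push (subst σ N) (subst σ M)
  | pop M => pop (subst (liftS σ) M)

/-- Capture-avoiding substitution `{N/x}M` of `N` for the variable bound
immediately outside `M`. -/
def subst1 (N : STm) : STm → STm :=
  subst (fun n => match n with | 0 => N | n+1 => var n star)

end STm

/-- Machine states: a stack of terms (written bottom-first, so the top
element is the last element of the list) together with a term. -/
abbrev SState := List STm × STm

/-- The transitions of the sequential stack machine:
`(S, [N].M) → (S·N, M)` and `(S·N, <x>.M) → (S, {N/x}M)`. -/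
inductive SMStep : SState → SState → Prop
  | push (S : List STm) (N M : STm) : SMStep (S, .push N M) (S ++ [N], M)
  | pop (S : List STm) (N M : STm) : SMStep (S ++ [N], .pop M) (S, STm.subst1 N M)

/-- A run of the sequential machine: a finite sequence of transitions. -/
def SRun : SState → SState → Prop := Relation.ReflTransGen SMStep

/-- Sequential types `ρ_n…ρ_1 ⟹ τ_1…τ_m`: an implication between two
finite vectors of sequential types. The first list is the input vector
as written (i.e. `arr (rev ρ⃗) τ⃗` represents `rev(ρ⃗) ⟹ τ⃗`). -/
inductive STy : Type
  | arr : List STy → List STy → STy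

/-- Typing judgments `Γ ⊢ M : τ` of the sequential λ-calculus, with the
context `Γ` a finite map from (de Bruijn) variables to types, given as a
list. -/
inductive Typing : List STy → STm → STy → Prop
  | star (Γ : List STy) (τs : List STy) :
      Typing Γ .star (.arr τs.reverse τs)
  | var (Γ : List STy) (n : Nat) (M : STm) (ρs σs τs υs : List STy) :
      Γ[n]? = some (.arr ρs.reverse σs) →
      Typing Γ M (.arr (σs.reverse ++ τs.reverse) υs) →
      Typing Γ (.var n M) (.arr (ρs.reverse ++ τs.reverse) υs)
  | abs (Γ : List STy) (M : STm) (ρ : STy) (σs τs : List STy) :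
      Typing (ρ :: Γ) M (.arr σs.reverse τs) →
      Typing Γ (.pop M) (.arr (ρ :: σs.reverse) τs)
  | app (Γ : List STy) (N M : STm) (ρ : STy) (σs τs : List STy) :
      Typing Γ N ρ →
      Typing Γ M (.arr (ρ :: σs.reverse) τs) →
      Typing Γ (.push N M) (.arr σs.reverse τs)

/-- β-reduction of the sequential λ-calculus: `[N].<x>.M → {N/x}M`,
closed under all contexts. -/
inductive SStep : STm → STm → Prop
  | beta (N M : STm) : SStep (.push N (.pop M)) (STm.subst1 N M)
  | var {M M' : STm} (n : Nat) : SStep M M' → SStep (.var n M) (.var n M')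
  | pushL {M M' : STm} (N : STm) : SStep M M' → SStep (.push N M) (.push N M')
  | pushArg {N N' : STm} (M : STm) : SStep N N' → SStep (.push N M) (.push N' M)
  | pop {M M' : STm} : SStep M M' → SStep (.pop M) (.pop M')

/-!
Subject reduction follows, as for the ordinary λ-calculus, from a substitution lemma: typing is
preserved by renamings and by well-typed substitutions. The one new ingredient is that substituting
`N` for a variable prefix `x.M` yields the composition `N ; M`, and composition types by chaining
stack effects: if `N : A ⟹ B` and `M : rev(B) C ⟹ D`, then `N ; M : A C ⟹ D`. A typed redex
`[N].<x>.M` is an `app` over an `abs`, so `N : ρ` and `x : ρ ⊢ M : τ`, whence `{N/x}M : τ`.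
-/

namespace Typing

/- The typing rules with the vectors that the rules write as `rev(ρ⃗)` given directly. -/

theorem var' {Γ : List STy} {n : Nat} {M : STm} {A B C D : List STy}
    (hn : Γ[n]? = some (.arr A B)) (hM : Typing Γ M (.arr (B.reverse ++ C) D)) :
    Typing Γ (.var n M) (.arr (A ++ C) D) := by
  simpa using Typing.var Γ n M A.reverse B C.reverse D (by simpa using hn) (by simpa using hM)

theorem abs' {Γ : List STy} {M : STm} {ρ : STy} {A B : List STy}
    (hM : Typing (ρ :: Γ) M (.arr A B)) : Typing Γ (.pop M) (.arr (ρ :: A) B) := by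
  simpa using Typing.abs Γ M ρ A.reverse B (by simpa using hM)

theorem app' {Γ : List STy} {N M : STm} {ρ : STy} {A B : List STy}
    (hN : Typing Γ N ρ) (hM : Typing Γ M (.arr (ρ :: A) B)) :
    Typing Γ (.push N M) (.arr A B) := by
  simpa using Typing.app Γ N M ρ A.reverse B hN (by simpa using hM)

theorem var_star {Γ : List STy} {n : Nat} {τ : STy} (hn : Γ[n]? = some τ) :
    Typing Γ (.var n .star) τ := by
  obtain ⟨A, B⟩ := τ
  simpa using var' (C := []) hn (by simpa using Typing.star Γ B)

theorem pop_inv {Γ : List STy} {M : STm} {τ : STy} (h : Typing Γ (.pop M) τ) :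
    ∃ ρ A B, τ = .arr (ρ :: A) B ∧ Typing (ρ :: Γ) M (.arr A B) := by
  cases h
  exact ⟨_, _, _, rfl, ‹_›⟩

end Typing

def WellTypedRenaming (f : Nat → Nat) (Γ Δ : List STy) : Prop :=
  ∀ n τ, Γ[n]? = some τ → Δ[f n]? = some τ

def WellTypedSubst (σ : Nat → STm) (Γ Δ : List STy) : Prop :=
  ∀ n τ, Γ[n]? = some τ → Typing Δ (σ n) τ

theorem wellTypedRenaming_succ (Γ : List STy) (ρ : STy) :
    WellTypedRenaming Nat.succ Γ (ρ :: Γ) := by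
  intro n τ hn
  simpa using hn

theorem WellTypedRenaming.liftF {f : Nat → Nat} {Γ Δ : List STy}
    (hf : WellTypedRenaming f Γ Δ) (ρ : STy) :
    WellTypedRenaming (STm.liftF f) (ρ :: Γ) (ρ :: Δ) := by
  rintro (_ | n) τ hn
  · simpa [STm.liftF] using hn
  · simpa [STm.liftF] using hf n τ (by simpa using hn)

theorem Typing.rename {Γ : List STy} {M : STm} {τ : STy} (hM : Typing Γ M τ) :
    ∀ {Δ : List STy} {f : Nat → Nat}, WellTypedRenaming f Γ Δ → Typing Δ (M.rename f) τ := by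
  induction hM with
  | star _ τs => exact fun _ => Typing.star _ τs
  | var _ n _ ρs σs τs υs hn _ ih =>
      exact fun hf => Typing.var _ _ _ ρs σs τs υs (hf n _ hn) (ih hf)
  | abs _ _ ρ σs τs _ ih => exact fun hf => Typing.abs _ _ ρ σs τs (ih (hf.liftF ρ))
  | app _ _ _ ρ σs τs _ _ ihN ihM => exact fun hf => Typing.app _ _ _ ρ σs τs (ihN hf) (ihM hf)

theorem Typing.comp {Γ : List STy} {N M : STm} {A B C D : List STy}
    (hN : Typing Γ N (.arr A B)) (hM : Typing Γ M (.arr (B.reverse ++ C) D)) :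
    Typing Γ (N.comp M) (.arr (A ++ C) D) := by
  generalize hτ : STy.arr A B = τ at hN
  induction hN generalizing A B C D M with
  | star => cases hτ; exact hM
  | var _ n _ ρs σs τs υs hn _ ih =>
      cases hτ
      simpa [STm.comp] using var' (C := τs.reverse ++ C) hn (by simpa using ih hM rfl)
  | abs _ _ ρ σs τs _ ih =>
      cases hτ
      exact abs' (ih (hM.rename (wellTypedRenaming_succ _ ρ)) rfl)
  | app _ _ _ ρ σs τs hP _ _ ih =>
      cases hτ
      exact app' hP (ih hM rfl)

theorem WellTypedSubst.liftS {σ : Nat → STm} {Γ Δ : List STy}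
    (hσ : WellTypedSubst σ Γ Δ) (ρ : STy) :
    WellTypedSubst (STm.liftS σ) (ρ :: Γ) (ρ :: Δ) := by
  rintro (_ | n) τ hn
  · exact Typing.var_star (by simpa [STm.liftS] using hn)
  · exact (hσ n τ (by simpa using hn)).rename (wellTypedRenaming_succ Δ ρ)

theorem wellTypedSubst_subst1 {Γ : List STy} {N : STm} {ρ : STy} (hN : Typing Γ N ρ) :
    WellTypedSubst (fun n => match n with | 0 => N | n + 1 => .var n .star) (ρ :: Γ) Γ := by
  rintro (_ | n) τ hn
  · obtain rfl : ρ = τ := by simpa using hn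
    exact hN
  · exact Typing.var_star (by simpa using hn)

theorem Typing.subst {Γ : List STy} {M : STm} {τ : STy} (hM : Typing Γ M τ) :
    ∀ {Δ : List STy} {σ : Nat → STm}, WellTypedSubst σ Γ Δ → Typing Δ (M.subst σ) τ := by
  induction hM with
  | star _ τs => exact fun _ => Typing.star _ τs
  | var _ n _ ρs σs τs υs hn _ ih =>
      exact fun hσ => (hσ n _ hn).comp (ih hσ)
  | abs _ _ ρ σs τs _ ih => exact fun hσ => Typing.abs _ _ ρ σs τs (ih (hσ.liftS ρ))
  | app _ _ _ ρ σs τs _ _ ihN ihM => exact fun hσ => Typing.app _ _ _ ρ σs τs (ihN hσ) (ihM hσ)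

theorem Typing.subst1 {Γ : List STy} {N M : STm} {ρ τ : STy}
    (hN : Typing Γ N ρ) (hM : Typing (ρ :: Γ) M τ) : Typing Γ (STm.subst1 N M) τ :=
  hM.subst (wellTypedSubst_subst1 hN)

/-- Subject reduction: if `Γ ⊢ N : τ` and `N` β-reduces in one step to `M`,
then `Γ ⊢ M : τ`. -/
theorem seq_subject_reduction (Γ : List STy) (N M : STm) (τ : STy)
    (hN : Typing Γ N τ) (h : SStep N M) :
    Typing Γ M τ := by
  induction h generalizing Γ τ with
  | beta =>
      obtain _ | _ | _ | ⟨_, _, _, _, _, _, hArg, hAbs⟩ := hN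
      obtain ⟨_, _, _, hτ, hBody⟩ := hAbs.pop_inv
      cases hτ
      exact hArg.subst1 hBody
  | var _ _ ih =>
      obtain _ | ⟨_, _, _, _, _, _, _, hn, hM⟩ | _ | _ := hN
      exact Typing.var _ _ _ _ _ _ _ hn (ih _ _ hM)
  | pushL _ _ ih =>
      obtain _ | _ | _ | ⟨_, _, _, _, _, _, hN, hM⟩ := hN
      exact Typing.app _ _ _ _ _ _ hN (ih _ _ hM)
  | pushArg _ _ ih =>
      obtain _ | _ | _ | ⟨_, _, _, _, _, _, hN, hM⟩ := hN
      exact Typing.app _ _ _ _ _ _ (ih _ _ hN) hM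
  | pop _ ih =>
      obtain _ | _ | ⟨_, _, _, _, _, hM⟩ | _ := hN
      exact Typing.abs _ _ _ _ _ (ih _ _ hM)
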